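/- If for each j the conditioning sets are nested, S_{d-2}(j;p) ⊆ S_{d-1}(j;p) for all d = 3,...,D, then the Kullback–Leibler divergence KL(f ‖ f_{V;d}) from the true density f to the Vecchia approximation of cutoff dimension d is monotone non-increasing in d. -/

import Mathlib

open Finset

/-- Marginal density of the coordinates in `S` (discrete formulation). -/
noncomputable def marginal {D : ℕ} {α : Type*} [Fintype α] [DecidableEq α]
    (f : (Fin D → α) → ℝ) (S : Finset (Fin D)) (z : Fin D → α) : ℝ :=
  ∑ w : Fin D → α, if ∀ i ∈ S, w i = z i then f w else 0

/-- History of the `j`-th step under the ordering `p`. -/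
def history {D : ℕ} (p : Equiv.Perm (Fin D)) (j : Fin D) : Finset (Fin D) :=
  (Finset.univ.filter (fun l => l < j)).image p

/-- The Vecchia approximation built from conditional densities of `f`. -/
noncomputable def vecchia {D : ℕ} {α : Type*} [Fintype α] [DecidableEq α]
    (f : (Fin D → α) → ℝ) (p : Equiv.Perm (Fin D)) (S : Fin D → Finset (Fin D))
    (z : Fin D → α) : ℝ :=
  ∏ j : Fin D, marginal f (insert (p j) (S j)) z / marginal f (S j) z

/-- Kullback–Leibler divergence `KL(f‖g) = ∑ f log(f/g)` (discrete formulation). -/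
noncomputable def KL {D : ℕ} {α : Type*} [Fintype α]
    (f g : (Fin D → α) → ℝ) : ℝ :=
  ∑ z : Fin D → α, f z * Real.log (f z / g z)
/-!
Taking logarithms,
`KL(f ‖ f_{V;d}) = E_f[log f] - ∑_j E_f[log f(z_{p j} | z_{S_{d-1}(j)})]`,
so it suffices that an expected conditional log-density `E_f[log f(z_x | z_S)]` can only grow
when the conditioning set grows to `S' ⊇ S` with `x ∉ S'` (which the history condition
guarantees). By `log t ≤ t - 1` the loss is at most `E_f[f(z_x | z_S) / f(z_x | z_{S'})] - 1`,
and that expectation is one: conditionally on `z_{S'}` it is `∑_{z_x} f(z_x | z_S) = 1`.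
-/

lemma sum_sum_update {D : ℕ} {α : Type*} [Fintype α] (x : Fin D) (F : (Fin D → α) → ℝ) :
    ∑ z, ∑ a, F (Function.update z x a) = Fintype.card α * ∑ z, F z := by
  let e : Equiv.Perm ((Fin D → α) × α) :=
    Function.Involutive.toPerm (fun q => (Function.update q.1 x q.2, q.1 x)) fun q => by simp
  calc ∑ z, ∑ a, F (Function.update z x a) = ∑ q, F (e q).1 := by
        rw [Fintype.sum_prod_type]; rfl
    _ = ∑ q : (Fin D → α) × α, F q.1 := Equiv.sum_comp e fun q => F q.1
    _ = Fintype.card α * ∑ z, F z := by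
        simp [Fintype.sum_prod_type, mul_sum, mul_comm]

section Marginal

variable {D : ℕ} {α : Type*} [Fintype α] [DecidableEq α] (f : (Fin D → α) → ℝ)

lemma marginal_pos (hf : ∀ z, 0 < f z) (T : Finset (Fin D)) (z : Fin D → α) :
    0 < marginal f T z :=
  sum_pos' (fun w _ => by split_ifs <;> simp [(hf w).le]) ⟨z, mem_univ z, by simp [hf z]⟩

lemma marginal_congr {T : Finset (Fin D)} {z z' : Fin D → α} (h : ∀ i ∈ T, z i = z' i) :
    marginal f T z = marginal f T z' :=
  sum_congr rfl fun _ _ => if_congr (forall₂_congr fun _ hi => by rw [h _ hi]) rfl rfl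

lemma marginal_update_of_notMem {T : Finset (Fin D)} {x : Fin D} (hx : x ∉ T)
    (z : Fin D → α) (a : α) : marginal f T (Function.update z x a) = marginal f T z :=
  marginal_congr f fun _ hi => Function.update_of_ne (ne_of_mem_of_not_mem hi hx) a z

lemma sum_marginal_insert_update {x : Fin D} {S : Finset (Fin D)} (hx : x ∉ S)
    (z : Fin D → α) :
    ∑ a, marginal f (insert x S) (Function.update z x a) = marginal f S z := by
  unfold marginal
  rw [sum_comm]
  refine sum_congr rfl fun w _ => ?_
  have hagree : ∀ a, (∀ i ∈ insert x S, w i = Function.update z x a i) ↔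
      (a = w x ∧ ∀ i ∈ S, w i = z i) := fun a => by
    simp only [forall_mem_insert, Function.update_self]
    refine and_congr eq_comm (forall₂_congr fun _ hi => ?_)
    rw [Function.update_of_ne (ne_of_mem_of_not_mem hi hx)]
  simp_rw [hagree, ite_and]
  rw [sum_ite_eq']
  simp

lemma card_filter_agree (T : Finset (Fin D)) (w : Fin D → α) :
    #{v : Fin D → α | ∀ i ∈ T, w i = v i} = Fintype.card α ^ (D - #T) := by
  have hpi : ({v : Fin D → α | ∀ i ∈ T, w i = v i} : Finset _) =
      Fintype.piFinset fun i => if i ∈ T then {w i} else univ := by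
    ext v
    simp only [mem_filter, mem_univ, true_and, Fintype.mem_piFinset]
    refine forall_congr' fun i => ?_
    split_ifs with hi <;> simp [hi, eq_comm]
  rw [hpi, Fintype.card_piFinset]
  simp only [apply_ite card, card_singleton, card_univ]
  rw [prod_ite, prod_const_one, one_mul, prod_const, filter_notMem_eq_sdiff, card_univ_sdiff,
    Fintype.card_fin]

/-- Each `f w` is counted once for every configuration that agrees with `w` on `T`. -/
lemma sum_marginal_mul {T : Finset (Fin D)} {g : (Fin D → α) → ℝ}
    (hg : ∀ z w : Fin D → α, (∀ i ∈ T, z i = w i) → g z = g w) :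
    ∑ z, marginal f T z * g z = Fintype.card α ^ (D - #T) * ∑ z, f z * g z := by
  unfold marginal
  simp_rw [sum_mul, ite_mul, zero_mul]
  rw [sum_comm, mul_sum]
  refine sum_congr rfl fun w _ => ?_
  rw [← sum_filter,
    sum_congr rfl fun z hz => by rw [hg z w fun i hi => ((mem_filter.1 hz).2 i hi).symm],
    sum_const, card_filter_agree, nsmul_eq_mul]
  push_cast
  ring

end Marginal

section CondDensity

variable {D : ℕ} {α : Type*} [Fintype α] [DecidableEq α] (f : (Fin D → α) → ℝ)

/-- `f(z_x | z_S)`, the factor of the Vecchia product. -/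
noncomputable def condDensity (x : Fin D) (S : Finset (Fin D)) (z : Fin D → α) : ℝ :=
  marginal f (insert x S) z / marginal f S z

noncomputable def condLogLik (x : Fin D) (S : Finset (Fin D)) : ℝ :=
  ∑ z, f z * Real.log (condDensity f x S z)

variable {f}

lemma condDensity_pos (hf : ∀ z, 0 < f z) (x : Fin D) (S : Finset (Fin D)) (z : Fin D → α) :
    0 < condDensity f x S z :=
  div_pos (marginal_pos f hf _ z) (marginal_pos f hf _ z)

lemma condDensity_congr {x : Fin D} {S : Finset (Fin D)} {z w : Fin D → α}
    (h : ∀ i ∈ insert x S, z i = w i) : condDensity f x S z = condDensity f x S w := by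
  rw [condDensity, condDensity, marginal_congr f h,
    marginal_congr f fun i hi => h i (subset_insert x S hi)]

lemma card_mul_sum_marginal_insert_mul_div (hf : ∀ z, 0 < f z) {x : Fin D}
    {S S' : Finset (Fin D)} (hxS : x ∉ S) (hxS' : x ∉ S') :
    Fintype.card α * ∑ z, marginal f (insert x S) z * (marginal f S' z / marginal f S z) =
      ∑ z, marginal f S' z := by
  rw [← sum_sum_update x]
  refine sum_congr rfl fun z _ => ?_
  simp only [marginal_update_of_notMem f hxS, marginal_update_of_notMem f hxS']
  rw [← sum_mul, sum_marginal_insert_update f hxS,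
    mul_div_cancel₀ _ (marginal_pos f hf S z).ne']

lemma sum_mul_condDensity_div (hf : ∀ z, 0 < f z) {x : Fin D} {S S' : Finset (Fin D)}
    (hx : x ∉ S') (hSS' : S ⊆ S') :
    ∑ z, f z * (condDensity f x S z / condDensity f x S' z) = ∑ z, f z := by
  rcases isEmpty_or_nonempty α with hα | hα
  · have : Nonempty (Fin D) := ⟨x⟩
    simp
  have hm : ∀ U z, 0 < marginal f U z := marginal_pos f hf
  have hratio : ∀ z, marginal f (insert x S') z * (condDensity f x S z / condDensity f x S' z) =
      marginal f (insert x S) z * (marginal f S' z / marginal f S z) := fun z => by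
    have := hm (insert x S') z; have := hm S z; have := hm S' z
    simp only [condDensity]
    field_simp
  have hmeas : ∀ z w : Fin D → α, (∀ i ∈ insert x S', z i = w i) →
      condDensity f x S z / condDensity f x S' z = condDensity f x S w / condDensity f x S' w :=
    fun z w h => by
      rw [condDensity_congr fun i hi => h i (insert_subset_insert x hSS' hi), condDensity_congr h]
  have hcard : #(insert x S') = #S' + 1 := card_insert_of_notMem hx
  have hD : #(insert x S') ≤ D := by simpa using card_le_univ (insert x S')
  have hn : (0 : ℝ) < Fintype.card α := by exact_mod_cast Fintype.card_pos
  refine mul_left_cancel₀ (pow_pos hn (D - #S')).ne' ?_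
  calc (Fintype.card α : ℝ) ^ (D - #S') *
        ∑ z, f z * (condDensity f x S z / condDensity f x S' z)
      = Fintype.card α * ∑ z, marginal f (insert x S') z *
          (condDensity f x S z / condDensity f x S' z) := by
        rw [sum_marginal_mul f hmeas, ← mul_assoc, ← pow_succ']
        congr 2
        omega
    _ = ∑ z, marginal f S' z := by
        simp_rw [hratio]
        exact card_mul_sum_marginal_insert_mul_div hf (fun h => hx (hSS' h)) hx
    _ = (Fintype.card α : ℝ) ^ (D - #S') * ∑ z, f z := by
        simpa using sum_marginal_mul f (T := S') (g := fun _ => 1) fun _ _ _ => rfl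

lemma condLogLik_mono (hf : ∀ z, 0 < f z) {x : Fin D} {S S' : Finset (Fin D)}
    (hx : x ∉ S') (hSS' : S ⊆ S') : condLogLik f x S ≤ condLogLik f x S' := by
  have hlog : ∀ z, Real.log (condDensity f x S z) - Real.log (condDensity f x S' z) ≤
      condDensity f x S z / condDensity f x S' z - 1 := fun z => by
    rw [← Real.log_div (condDensity_pos hf x S z).ne' (condDensity_pos hf x S' z).ne']
    exact Real.log_le_sub_one_of_pos
      (div_pos (condDensity_pos hf x S z) (condDensity_pos hf x S' z))
  rw [← sub_nonpos, condLogLik, condLogLik, ← sum_sub_distrib]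
  calc ∑ z, (f z * Real.log (condDensity f x S z) - f z * Real.log (condDensity f x S' z))
      ≤ ∑ z, f z * (condDensity f x S z / condDensity f x S' z - 1) :=
        sum_le_sum fun z _ => by
          rw [← mul_sub]; exact mul_le_mul_of_nonneg_left (hlog z) (hf z).le
    _ = 0 := by
        rw [sum_congr rfl fun z _ => mul_sub_one (f z) _, sum_sub_distrib,
          sum_mul_condDensity_div hf hx hSS', sub_self]

end CondDensity

lemma KL_vecchia_eq {D : ℕ} {α : Type*} [Fintype α] [DecidableEq α]
    {f : (Fin D → α) → ℝ} (hf : ∀ z, 0 < f z) (p : Equiv.Perm (Fin D))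
    (S : Fin D → Finset (Fin D)) :
    KL f (vecchia f p S) = ∑ z, f z * Real.log (f z) - ∑ j, condLogLik f (p j) (S j) := by
  have hlog : ∀ z, Real.log (vecchia f p S z) = ∑ j, Real.log (condDensity f (p j) (S j) z) :=
    fun z => Real.log_prod fun j _ => (condDensity_pos hf _ _ z).ne'
  have hpos : ∀ z, 0 < vecchia f p S z := fun z => prod_pos fun j _ => condDensity_pos hf _ _ z
  calc KL f (vecchia f p S)
      = ∑ z, (f z * Real.log (f z) - ∑ j, f z * Real.log (condDensity f (p j) (S j) z)) :=
        sum_congr rfl fun z _ => by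
          rw [Real.log_div (hf z).ne' (hpos z).ne', mul_sub, hlog, mul_sum]
    _ = ∑ z, f z * Real.log (f z) - ∑ j, condLogLik f (p j) (S j) := by
        rw [sum_sub_distrib, sum_comm]; rfl

lemma notMem_history_self {D : ℕ} (p : Equiv.Perm (Fin D)) (j : Fin D) : p j ∉ history p j := by
  simp [history]

theorem KL_vecchia_antitone_in_cutoff_general
    {D : ℕ} {α : Type*} [Fintype α] [DecidableEq α]
    (f : (Fin D → α) → ℝ) (p : Equiv.Perm (Fin D))
    (S : Fin D → ℕ → Finset (Fin D))
    (hpos : ∀ z, 0 < f z)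
    (hhist : ∀ j d, S j d ⊆ history p j)
    (hnested : ∀ j d, S j d ⊆ S j (d + 1)) :
    ∀ d₁ d₂ : ℕ, d₁ ≤ d₂ →
      KL f (vecchia f p (fun j => S j d₂)) ≤ KL f (vecchia f p (fun j => S j d₁)) := by
  intro d₁ d₂ hd
  rw [KL_vecchia_eq hpos, KL_vecchia_eq hpos]
  refine sub_le_sub_left (sum_le_sum fun j _ => condLogLik_mono hpos ?_ ?_) _
  · exact fun hmem => notMem_history_self p j (hhist j d₂ hmem)
  · exact monotone_nat_of_le_succ (hnested j) hd

/-- If the conditioning sets `S_{d-1}(j;p)` (here `S j d`, for cutoff dimension `d`)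
are nested in `d` (and each of cardinality `min(j,d) - 1`, contained in the history
`H(j;p)`), then the KL divergence `KL(f ‖ f_{V;d})` from the true density `f` to the
Vecchia approximation of cutoff dimension `d` is monotone non-increasing in `d`. -/
theorem KL_vecchia_antitone_in_cutoff
    {D : ℕ} {α : Type*} [Fintype α] [DecidableEq α]
    (f : (Fin D → α) → ℝ) (p : Equiv.Perm (Fin D))
    (S : Fin D → ℕ → Finset (Fin D))
    (hpos : ∀ z, 0 < f z) (hsum : ∑ z : Fin D → α, f z = 1)
    (hhist : ∀ j d, S j d ⊆ history p j)
    (hcard : ∀ j d, (S j d).card = min (j.val + 1) d - 1)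
    (hnested : ∀ j d, S j d ⊆ S j (d + 1)) :
    ∀ d₁ d₂ : ℕ, d₁ ≤ d₂ →
      KL f (vecchia f p (fun j => S j d₂)) ≤ KL f (vecchia f p (fun j => S j d₁)) :=
  KL_vecchia_antitone_in_cutoff_general f p S hpos hhist hnested
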